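/- (Downward step of the filler construction.) Let X and Y be simplicial sets equipped with Maltsev structures m^X, m^Y, and let f : X ⟶ Y be a morphism of simplicial sets compatible with the Maltsev structures. Fix n ≥ 1, y ∈ Y_n, and 1 ≤ j ≤ n. Suppose w ∈ X_n satisfies f_n(w) = y, and x_j ∈ X_{n-1} satisfies f_{n-1}(x_j) = d_j y. Set w' := m^X_n(w, s_{j-1} d_j w, s_{j-1} x_j). Then: (i) f_n(w') = y; (ii) d_j w' = x_j; (iii) for every i < j - 1 and every x_i ∈ X_{n-1}, if d_i w = x_i and d_i x_j = d_{j-1} x_i, then d_i w' = x_i; and (iv) for every i with j < i ≤ n and every x_i ∈ X_{n-1}, if d_i w = x_i and d_j x_i = d_{i-1} x_j, then d_i w' = x_i. -/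

import Mathlib

/-!
Write `w' = m(w, a, b)` with `a = s_{j-1} d_j w` and `b = s_{j-1} x_j`. Since `d_j s_{j-1} = id`,
`d_j w' = m(d_j w, d_j w, x_j) = x_j`. For a face `d_i` with `i ≠ j - 1, j`, the simplicial
identities move `d_i` past `s_{j-1}`, after which the hypothesis relating `x_i` and `x_j` gives
`d_i a = d_i b`; likewise `f a = f b` because `f x_j = d_j y`. In both cases `m(u, v, v) = u`
shows that `w'` keeps the face `d_i w`, resp. the image `f w = y`.
-/

open CategoryTheory Simplicial SSet Opposite

universe u

/-- A Maltsev structure on a simplicial set `X`: a family of ternary operations,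
one in each degree, commuting with the action of every morphism of the simplex
category and satisfying the Maltsev identities. -/
structure MaltsevStructure (X : SSet.{u}) where
  mal : ∀ s : SimplexCategoryᵒᵖ, X.obj s → X.obj s → X.obj s → X.obj s
  natural : ∀ {s t : SimplexCategoryᵒᵖ} (φ : s ⟶ t) (a b c : X.obj s),
    X.map φ (mal s a b c) = mal t (X.map φ a) (X.map φ b) (X.map φ c)
  mal_left : ∀ (s : SimplexCategoryᵒᵖ) (a b : X.obj s), mal s a a b = b
  mal_right : ∀ (s : SimplexCategoryᵒᵖ) (a b : X.obj s), mal s a b b = a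

/-- A morphism of simplicial sets is compatible with given Maltsev structures if
it commutes with the ternary operations in every degree. -/
def MaltsevCompatible {X Y : SSet.{u}} (f : X ⟶ Y)
    (mX : MaltsevStructure X) (mY : MaltsevStructure Y) : Prop :=
  ∀ (s : SimplexCategoryᵒᵖ) (a b c : X.obj s),
    f.app s (mX.mal s a b c) = mY.mal s (f.app s a) (f.app s b) (f.app s c)

/-- Transport of simplices along an equality of dimensions. -/
def castDim (X : SSet.{u}) {a b : ℕ} (h : a = b) (x : X _⦋a⦌) : X _⦋b⦌ := h ▸ x

namespace SSet

variable {X : SSet.{u}}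

lemma δ_castSucc_σ_eq_of_lt {n : ℕ} {i k : Fin (n + 2)} (hik : i < k) {a b : X _⦋n + 1⦌}
    (h : X.δ i a = X.δ i b) : X.δ i.castSucc (X.σ k a) = X.δ i.castSucc (X.σ k b) := by
  obtain ⟨k, rfl⟩ := Fin.exists_succ_eq.2 (Fin.ne_zero_of_lt hik)
  have hik' : i ≤ k.castSucc := Fin.le_castSucc_iff.2 hik
  rw [δ_comp_σ_of_le_apply hik', δ_comp_σ_of_le_apply hik', h]

lemma δ_σ_eq_of_succ_lt {n : ℕ} {i : Fin (n + 3)} {k : Fin (n + 2)} (hki : k.succ < i)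
    {a b : X _⦋n + 1⦌} (h : X.δ (i.pred (Fin.ne_zero_of_lt hki)) a =
      X.δ (i.pred (Fin.ne_zero_of_lt hki)) b) :
    X.δ i (X.σ k a) = X.δ i (X.σ k b) := by
  rw [δ_comp_σ_of_gt'_apply hki, δ_comp_σ_of_gt'_apply hki, h]

end SSet

namespace MaltsevStructure

variable {X : SSet.{u}} (m : MaltsevStructure X)

lemma δ_mal {n : ℕ} (i : Fin (n + 2)) (a b c : X _⦋n + 1⦌) :
    X.δ i (m.mal _ a b c) = m.mal _ (X.δ i a) (X.δ i b) (X.δ i c) :=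
  m.natural _ a b c

lemma δ_mal_of_δ_eq {n : ℕ} {i : Fin (n + 2)} (a : X _⦋n + 1⦌) {b c : X _⦋n + 1⦌}
    (h : X.δ i b = X.δ i c) : X.δ i (m.mal _ a b c) = X.δ i a := by
  rw [δ_mal, h, m.mal_right]

def downwardStep {n : ℕ} (j : Fin (n + 2)) (hj : j ≠ 0) (w : X _⦋n + 1⦌) (x : X _⦋n⦌) :
    X _⦋n + 1⦌ :=
  m.mal _ w (X.σ (j.pred hj) (X.δ j w)) (X.σ (j.pred hj) x)

lemma δ_downwardStep {n : ℕ} (j : Fin (n + 2)) (hj : j ≠ 0) (w : X _⦋n + 1⦌) (x : X _⦋n⦌) :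
    X.δ j (m.downwardStep j hj w x) = x := by
  have hj' : j = (j.pred hj).succ := (Fin.succ_pred j hj).symm
  rw [downwardStep, δ_mal, δ_comp_σ_succ'_apply hj', δ_comp_σ_succ'_apply hj', m.mal_left]

lemma δ_castSucc_downwardStep_of_succ_lt {n : ℕ} {j : Fin (n + 3)} (hj : j ≠ 0)
    {i : Fin (n + 2)} (hij : i.succ < j) (w : X _⦋n + 2⦌) {x : X _⦋n + 1⦌}
    (h : X.δ i x = X.δ (j.pred hj) (X.δ i.castSucc w)) :
    X.δ i.castSucc (m.downwardStep j hj w x) = X.δ i.castSucc w := by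
  have hij' : i.castSucc < j := Fin.castSucc_lt_succ.trans hij
  refine m.δ_mal_of_δ_eq w (δ_castSucc_σ_eq_of_lt ?_ ?_)
  · rwa [Fin.lt_pred_iff]
  · rw [δ_comp_δ'_apply hij', h]

lemma δ_downwardStep_of_lt {n : ℕ} {j : Fin (n + 3)} (hj : j ≠ 0) {i : Fin (n + 3)}
    (hji : j < i) (w : X _⦋n + 2⦌) {x : X _⦋n + 1⦌}
    (h : X.δ (j.castLT (by omega)) (X.δ i w) = X.δ (i.pred (Fin.ne_zero_of_lt hji)) x) :
    X.δ i (m.downwardStep j hj w x) = X.δ i w := by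
  have hji' : (j.pred hj).succ < i := by rwa [Fin.succ_pred]
  have hji'' : j ≤ (i.pred (Fin.ne_zero_of_lt hji)).castSucc := by
    rwa [Fin.le_castSucc_iff, Fin.succ_pred]
  refine m.δ_mal_of_δ_eq w (δ_σ_eq_of_succ_lt hji' ?_)
  rw [← δ_comp_δ''_apply hji'', Fin.succ_pred, h]

end MaltsevStructure

lemma MaltsevCompatible.app_mal_of_app_eq {X Y : SSet.{u}} {f : X ⟶ Y}
    {mX : MaltsevStructure X} {mY : MaltsevStructure Y} (hf : MaltsevCompatible f mX mY)
    {s : SimplexCategoryᵒᵖ} (a : X.obj s) {b c : X.obj s} (h : f.app s b = f.app s c) :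
    f.app s (mX.mal s a b c) = f.app s a := by
  rw [hf, h, mY.mal_right]

lemma MaltsevCompatible.app_downwardStep {X Y : SSet.{u}} {f : X ⟶ Y}
    {mX : MaltsevStructure X} {mY : MaltsevStructure Y} (hf : MaltsevCompatible f mX mY)
    {n : ℕ} (j : Fin (n + 2)) (hj : j ≠ 0) (w : X _⦋n + 1⦌) {x : X _⦋n⦌}
    (h : f.app _ x = Y.δ j (f.app _ w)) :
    f.app _ (mX.downwardStep j hj w x) = f.app _ w := by
  refine hf.app_mal_of_app_eq w ?_
  rw [σ_naturality_apply, σ_naturality_apply, δ_naturality_apply, h]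

/-- Downward step of the filler construction: if `f w = y` and `f xj = dⱼ y`
(with `1 ≤ j`), then `w' = m (w, s_{j-1} dⱼ w, s_{j-1} xj)` still lies over `y`,
has `dⱼ w' = xj`, retains all faces `dᵢ w = xᵢ` for `i < j - 1` provided
`dᵢ xj = d_{j-1} xᵢ`, and retains all faces `dᵢ w = xᵢ` for `j < i` provided
`dⱼ xᵢ = d_{i-1} xj`. -/
theorem maltsev_filler_downward_step
    {X Y : SSet.{u}} (mX : MaltsevStructure X) (mY : MaltsevStructure Y)
    (f : X ⟶ Y) (hcompat : MaltsevCompatible f mX mY)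
    (n : ℕ) (y : Y _⦋n + 1⦌) (j : Fin (n + 2)) (hj : 1 ≤ (j : ℕ))
    (w : X _⦋n + 1⦌) (hw : f.app (op ⦋n + 1⦌) w = y)
    (xj : X _⦋n⦌) (hxj : f.app (op ⦋n⦌) xj = Y.δ j y) :
    f.app (op ⦋n + 1⦌) (mX.mal (op ⦋n + 1⦌) w
      (X.σ ⟨(j : ℕ) - 1, by omega⟩ (X.δ j w)) (X.σ ⟨(j : ℕ) - 1, by omega⟩ xj)) = y ∧
    X.δ j (mX.mal (op ⦋n + 1⦌) w
      (X.σ ⟨(j : ℕ) - 1, by omega⟩ (X.δ j w)) (X.σ ⟨(j : ℕ) - 1, by omega⟩ xj)) = xj ∧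
    (∀ (l : ℕ) (hl : n = l + 1) (i : Fin (n + 2)) (hij : (i : ℕ) < (j : ℕ) - 1)
      (xi : X _⦋n⦌),
        X.δ i w = xi →
        X.δ (n := l) ⟨(i : ℕ), by omega⟩ (castDim X hl xj) =
          X.δ (n := l) ⟨(j : ℕ) - 1, by omega⟩ (castDim X hl xi) →
        X.δ i (mX.mal (op ⦋n + 1⦌) w
          (X.σ ⟨(j : ℕ) - 1, by omega⟩ (X.δ j w)) (X.σ ⟨(j : ℕ) - 1, by omega⟩ xj)) = xi) ∧
    (∀ (l : ℕ) (hl : n = l + 1) (i : Fin (n + 2)) (hji : (j : ℕ) < (i : ℕ))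
      (xi : X _⦋n⦌),
        X.δ i w = xi →
        X.δ (n := l) ⟨(j : ℕ), by omega⟩ (castDim X hl xi) =
          X.δ (n := l) ⟨(i : ℕ) - 1, by omega⟩ (castDim X hl xj) →
        X.δ i (mX.mal (op ⦋n + 1⦌) w
          (X.σ ⟨(j : ℕ) - 1, by omega⟩ (X.δ j w)) (X.σ ⟨(j : ℕ) - 1, by omega⟩ xj)) = xi) := by
  have hj0 : j ≠ 0 := Fin.pos_iff_ne_zero.1 hj
  subst hw
  refine ⟨hcompat.app_downwardStep j hj0 w hxj, mX.δ_downwardStep j hj0 w xj, ?_, ?_⟩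
  -- the statement's `Fin.mk` indices agree definitionally with the lemmas' `castSucc`,
  -- `castLT` and `pred` indices
  · rintro l rfl i hij _ rfl hcomm
    exact mX.δ_castSucc_downwardStep_of_succ_lt (i := ⟨i, by omega⟩) hj0
      (by rw [Fin.lt_def, Fin.val_succ, Fin.val_mk]; omega) w hcomm
  · rintro l rfl i hji _ rfl hcomm
    exact mX.δ_downwardStep_of_lt hj0 hji w hcomm
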